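/- arXiv:1410.5693 — 4 statements merged into one kernel-verified Lean document; each statement's English description precedes it below -/
import Mathlib

section
/- Let v₁,…,v_k ∈ ℂⁿ with ‖v_i‖² ≤ δ for all i, and suppose α‖w‖² ≤ ∑_{i=1}^k |⟨w,v_i⟩|² ≤ β‖w‖² for all w ∈ ℂⁿ, where α > δ > 0. Then there exists a partition of {1,…,k} into S₁ and S₂ such that for each j = 1,2 and all w ∈ ℂⁿ: ((1−5√(δ/α))/2)·α·‖w‖² ≤ ∑_{i∈S_j} |⟨w,v_i⟩|² ≤ ((1+5√(δ/α))/2)·β·‖w‖². (This may be deduced assuming the Marcus–Spielman–Srivastava partition theorem: if ‖u_i‖² ≤ ε for all i and ∑|⟨w,u_i⟩|² = ‖w‖² for all w, then {1,…,m} can be partitioned into two sets on each of which ∑|⟨w,u_i⟩|² ≤ ((1+√(2ε))²/2)‖w‖².) -/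
/-!
Let `T = ∑ vᵢ vᵢ*` be the frame operator, so `α ≤ T` and `∑ |⟨w, vᵢ⟩|² = ‖T^{1/2} w‖²`.
The whitened vectors `uᵢ = T^{-1/2} vᵢ` form a Parseval frame with `‖uᵢ‖² ≤ δ / α`, so the
Marcus–Spielman–Srivastava theorem with `ε = δ / α` splits them into two parts, each with
upper frame bound `(1 + √(2ε))² / 2 ≤ (1 + 5√ε) / 2`. Since `⟨w, vᵢ⟩ = ⟨T^{1/2} w, uᵢ⟩`, the same
partition bounds each part of `v` above by that constant times the full sum, hence by `β`; the
lower bounds come from subtracting the upper bound of the other part.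
-/

open InnerProductSpace ContinuousLinearMap

variable {E ι : Type*} [NormedAddCommGroup E] [InnerProductSpace ℂ E]

section FrameOperator

variable [Fintype ι] (v : ι → E)

noncomputable def frameOperator : E →L[ℂ] E := ∑ i, rankOne ℂ (v i) (v i)

lemma frameOperator_nonneg : 0 ≤ frameOperator v :=
  (nonneg_iff_isPositive _).2 <| isPositive_sum _ fun i _ => isPositive_rankOne_self (v i)

lemma inner_frameOperator_self (w : E) :
    ⟪w, frameOperator v w⟫_ℂ = ((∑ i, ‖⟪w, v i⟫_ℂ‖ ^ 2 : ℝ) : ℂ) := by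
  simp only [frameOperator, sum_apply, rankOne_apply, inner_sum, inner_smul_right]
  push_cast
  refine Finset.sum_congr rfl fun i _ => ?_
  rw [← inner_conj_symm, mul_comm, RCLike.mul_conj]
  rfl

lemma norm_sqrt_frameOperator_apply_sq [CompleteSpace E] (w : E) :
    ‖CFC.sqrt (frameOperator v) w‖ ^ 2 = ∑ i, ‖⟪w, v i⟫_ℂ‖ ^ 2 := by
  have hsa : IsSelfAdjoint (CFC.sqrt (frameOperator v)) := (CFC.sqrt_nonneg _).isSelfAdjoint
  have h := inner_frameOperator_self v w
  rw [← CFC.sqrt_mul_sqrt_self _ (frameOperator_nonneg v), mul_apply_eq_comp,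
    ← adjoint_inner_left, hsa.adjoint_eq, inner_self_eq_norm_sq_to_K, ← RCLike.ofReal_pow] at h
  exact RCLike.ofReal_injective h

end FrameOperator

lemma exists_equiv_norm_sq_eq_sum_inner [FiniteDimensional ℂ E] [Fintype ι] {v : ι → E} {α : ℝ}
    (hα : 0 < α) (hlow : ∀ w, α * ‖w‖ ^ 2 ≤ ∑ i, ‖⟪w, v i⟫_ℂ‖ ^ 2) :
    ∃ Q : E ≃L[ℂ] E, ∀ w, ‖Q w‖ ^ 2 = ∑ i, ‖⟪w, v i⟫_ℂ‖ ^ 2 := by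
  set Q := CFC.sqrt (frameOperator v)
  have hinj : Function.Injective Q := by
    refine (injective_iff_map_eq_zero Q).2 fun w hw => ?_
    have h := hlow w
    rw [← norm_sqrt_frameOperator_apply_sq, hw, norm_zero] at h
    have : ‖w‖ ^ 2 ≤ 0 := by nlinarith
    simpa using this
  exact ⟨(LinearEquiv.ofInjectiveEndo Q.toLinearMap hinj).toContinuousLinearEquiv,
    norm_sqrt_frameOperator_apply_sq v⟩

section Whiten

variable [CompleteSpace E] (Q : E ≃L[ℂ] E) (v : ι → E)

/-- `(Q⁻¹)* v`; for `Q = T^{1/2}` this is the canonical Parseval frame `T^{-1/2} v`. -/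
noncomputable def whiten : ι → E := fun i => adjoint (Q.symm : E →L[ℂ] E) (v i)

lemma inner_apply_whiten (w : E) (i : ι) : ⟪Q w, whiten Q v i⟫_ℂ = ⟪w, v i⟫_ℂ := by
  rw [whiten, adjoint_inner_right, ContinuousLinearEquiv.coe_coe, Q.symm_apply_apply]

variable {Q v} [Fintype ι] (hQ : ∀ w, ‖Q w‖ ^ 2 = ∑ i, ‖⟪w, v i⟫_ℂ‖ ^ 2)
include hQ

lemma sum_norm_inner_whiten_sq (y : E) : ∑ i, ‖⟪y, whiten Q v i⟫_ℂ‖ ^ 2 = ‖y‖ ^ 2 := by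
  simpa only [← inner_apply_whiten Q v, Q.apply_symm_apply] using (hQ (Q.symm y)).symm

lemma norm_whiten_sq_le {α : ℝ} (hα : 0 < α) (hlow : ∀ w, α * ‖w‖ ^ 2 ≤ ∑ i, ‖⟪w, v i⟫_ℂ‖ ^ 2)
    (i : ι) : ‖whiten Q v i‖ ^ 2 ≤ ‖v i‖ ^ 2 / α := by
  have hsymm : ‖(Q.symm : E →L[ℂ] E)‖ ≤ (√α)⁻¹ := by
    refine opNorm_le_bound _ (by positivity) fun y => ?_
    have h := hlow (Q.symm y)
    rw [← hQ, Q.apply_symm_apply] at h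
    rw [ContinuousLinearEquiv.coe_coe, ← sq_le_sq₀ (norm_nonneg _) (by positivity), mul_pow,
      inv_pow, Real.sq_sqrt hα.le, inv_mul_eq_div, le_div_iff₀ hα]
    linarith
  have hnorm : ‖whiten Q v i‖ ≤ (√α)⁻¹ * ‖v i‖ :=
    (le_opNorm _ _).trans (mul_le_mul_of_nonneg_right
      ((LinearIsometryEquiv.norm_map adjoint _).trans_le hsymm) (norm_nonneg _))
  calc ‖whiten Q v i‖ ^ 2 ≤ ((√α)⁻¹ * ‖v i‖) ^ 2 := pow_le_pow_left₀ (norm_nonneg _) hnorm 2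
    _ = ‖v i‖ ^ 2 / α := by rw [mul_pow, inv_pow, Real.sq_sqrt hα.le, inv_mul_eq_div]

lemma sum_norm_inner_sq_le_of_whiten (s : Finset ι) {C : ℝ}
    (hs : ∀ y, ∑ i ∈ s, ‖⟪y, whiten Q v i⟫_ℂ‖ ^ 2 ≤ C * ‖y‖ ^ 2) (w : E) :
    ∑ i ∈ s, ‖⟪w, v i⟫_ℂ‖ ^ 2 ≤ C * ∑ i, ‖⟪w, v i⟫_ℂ‖ ^ 2 := by
  simpa only [inner_apply_whiten, hQ] using hs (Q w)

end Whiten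

lemma one_add_sqrt_two_mul_sq_div_two_le {ε : ℝ} (hε : ε ≤ 1) : (1 + √(2 * ε)) ^ 2 / 2 ≤ (1 + 5 * √ε) / 2 := by
  have hq0 := Real.sqrt_nonneg ε
  have hq1 : √ε ≤ 1 := Real.sqrt_le_one.mpr hε
  have h2 : √2 ≤ 3 / 2 := Real.sqrt_le_iff.2 ⟨by norm_num, by norm_num⟩
  have hexp : (1 + √(2 * ε)) ^ 2 = 1 + 2 * √2 * √ε + 2 * √ε ^ 2 := by
    rw [Real.sqrt_mul zero_le_two]
    linear_combination √ε ^ 2 * Real.sq_sqrt (zero_le_two : (0 : ℝ) ≤ 2)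
  rw [hexp]
  nlinarith [mul_nonneg hq0 (by linarith : 0 ≤ 5 - 2 * √2 - 2 * √ε)]

lemma bounds_of_add_eq_of_le_mul {a c t C q α β x : ℝ} (hq : 0 ≤ q) (hα : 0 ≤ α) (hx : 0 ≤ x)
    (ha : 0 ≤ a) (hsum : a + c = t) (hat : a ≤ C * t) (hct : c ≤ C * t)
    (hC : C ≤ (1 + 5 * q) / 2) (hlo : α * x ≤ t) (hhi : t ≤ β * x) :
    (1 - 5 * q) / 2 * α * x ≤ a ∧ a ≤ (1 + 5 * q) / 2 * β * x := by
  have ht : 0 ≤ t := (mul_nonneg hα hx).trans hlo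
  refine ⟨?_, by nlinarith⟩
  rcases le_total (1 - 5 * q) 0 with h | h
  · nlinarith [mul_nonneg hα hx]
  · nlinarith

theorem stmt2_general (n k : ℕ) (δ α β : ℝ) (hδ : 0 < δ) (hα : δ < α)
    (hMSS : ∀ (m : ℕ) (ε : ℝ), 0 < ε → ∀ u : Fin m → EuclideanSpace ℂ (Fin n),
      (∀ i, ‖u i‖ ^ 2 ≤ ε) →
      (∀ w : EuclideanSpace ℂ (Fin n), ∑ i, ‖(inner ℂ w (u i) : ℂ)‖ ^ 2 = ‖w‖ ^ 2) →
      ∃ S : Finset (Fin m), ∀ w : EuclideanSpace ℂ (Fin n),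
        (∑ i ∈ S, ‖(inner ℂ w (u i) : ℂ)‖ ^ 2 ≤ (1 + Real.sqrt (2 * ε)) ^ 2 / 2 * ‖w‖ ^ 2) ∧
        (∑ i ∈ Sᶜ, ‖(inner ℂ w (u i) : ℂ)‖ ^ 2 ≤ (1 + Real.sqrt (2 * ε)) ^ 2 / 2 * ‖w‖ ^ 2))
    (v : Fin k → EuclideanSpace ℂ (Fin n))
    (hv : ∀ i, ‖v i‖ ^ 2 ≤ δ)
    (hframe : ∀ w : EuclideanSpace ℂ (Fin n),
      α * ‖w‖ ^ 2 ≤ ∑ i, ‖(inner ℂ w (v i) : ℂ)‖ ^ 2 ∧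
      ∑ i, ‖(inner ℂ w (v i) : ℂ)‖ ^ 2 ≤ β * ‖w‖ ^ 2) :
    ∃ S : Finset (Fin k), ∀ w : EuclideanSpace ℂ (Fin n),
      ((1 - 5 * Real.sqrt (δ / α)) / 2 * α * ‖w‖ ^ 2 ≤ ∑ i ∈ S, ‖(inner ℂ w (v i) : ℂ)‖ ^ 2 ∧
        ∑ i ∈ S, ‖(inner ℂ w (v i) : ℂ)‖ ^ 2 ≤ (1 + 5 * Real.sqrt (δ / α)) / 2 * β * ‖w‖ ^ 2) ∧
      ((1 - 5 * Real.sqrt (δ / α)) / 2 * α * ‖w‖ ^ 2 ≤ ∑ i ∈ Sᶜ, ‖(inner ℂ w (v i) : ℂ)‖ ^ 2 ∧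
        ∑ i ∈ Sᶜ, ‖(inner ℂ w (v i) : ℂ)‖ ^ 2 ≤ (1 + 5 * Real.sqrt (δ / α)) / 2 * β * ‖w‖ ^ 2) := by
  have hα0 : 0 < α := hδ.trans hα
  have hlow := fun w => (hframe w).1
  obtain ⟨Q, hQ⟩ := exists_equiv_norm_sq_eq_sum_inner hα0 hlow
  have hu : ∀ i, ‖whiten Q v i‖ ^ 2 ≤ δ / α := fun i =>
    (norm_whiten_sq_le hQ hα0 hlow i).trans (div_le_div_of_nonneg_right (hv i) hα0.le)
  obtain ⟨S, hS⟩ := hMSS k (δ / α) (div_pos hδ hα0) _ hu (sum_norm_inner_whiten_sq hQ)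
  have hC := one_add_sqrt_two_mul_sq_div_two_le ((div_le_one hα0).2 hα.le)
  refine ⟨S, fun w => ?_⟩
  have hSw := sum_norm_inner_sq_le_of_whiten hQ S (fun y => (hS y).1) w
  have hScw := sum_norm_inner_sq_le_of_whiten hQ Sᶜ (fun y => (hS y).2) w
  have hsplit := Finset.sum_add_sum_compl S fun i => ‖(inner ℂ w (v i) : ℂ)‖ ^ 2
  have hnonneg (s : Finset (Fin k)) : 0 ≤ ∑ i ∈ s, ‖(inner ℂ w (v i) : ℂ)‖ ^ 2 :=
    Finset.sum_nonneg fun i _ => sq_nonneg _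
  exact ⟨bounds_of_add_eq_of_le_mul (Real.sqrt_nonneg _) hα0.le (sq_nonneg _) (hnonneg S)
      hsplit hSw hScw hC (hframe w).1 (hframe w).2,
    bounds_of_add_eq_of_le_mul (Real.sqrt_nonneg _) hα0.le (sq_nonneg _) (hnonneg Sᶜ)
      ((add_comm _ _).trans hsplit) hScw hSw hC (hframe w).1 (hframe w).2⟩

/-- Corollary B: given the Marcus–Spielman–Srivastava partition theorem
as a hypothesis, a frame of small vectors can be split into two parts, each of which
is again a frame with controlled bounds. -/
theorem stmt2 (n k : ℕ) (δ α β : ℝ) (hδ : 0 < δ) (hα : δ < α) (hβ : 0 < β)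
    (hMSS : ∀ (m : ℕ) (ε : ℝ), 0 < ε → ∀ u : Fin m → EuclideanSpace ℂ (Fin n),
      (∀ i, ‖u i‖ ^ 2 ≤ ε) →
      (∀ w : EuclideanSpace ℂ (Fin n), ∑ i, ‖(inner ℂ w (u i) : ℂ)‖ ^ 2 = ‖w‖ ^ 2) →
      ∃ S : Finset (Fin m), ∀ w : EuclideanSpace ℂ (Fin n),
        (∑ i ∈ S, ‖(inner ℂ w (u i) : ℂ)‖ ^ 2 ≤ (1 + Real.sqrt (2 * ε)) ^ 2 / 2 * ‖w‖ ^ 2) ∧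
        (∑ i ∈ Sᶜ, ‖(inner ℂ w (u i) : ℂ)‖ ^ 2 ≤ (1 + Real.sqrt (2 * ε)) ^ 2 / 2 * ‖w‖ ^ 2))
    (v : Fin k → EuclideanSpace ℂ (Fin n))
    (hv : ∀ i, ‖v i‖ ^ 2 ≤ δ)
    (hframe : ∀ w : EuclideanSpace ℂ (Fin n),
      α * ‖w‖ ^ 2 ≤ ∑ i, ‖(inner ℂ w (v i) : ℂ)‖ ^ 2 ∧
      ∑ i, ‖(inner ℂ w (v i) : ℂ)‖ ^ 2 ≤ β * ‖w‖ ^ 2) :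
    ∃ S : Finset (Fin k), ∀ w : EuclideanSpace ℂ (Fin n),
      ((1 - 5 * Real.sqrt (δ / α)) / 2 * α * ‖w‖ ^ 2 ≤ ∑ i ∈ S, ‖(inner ℂ w (v i) : ℂ)‖ ^ 2 ∧
        ∑ i ∈ S, ‖(inner ℂ w (v i) : ℂ)‖ ^ 2 ≤ (1 + 5 * Real.sqrt (δ / α)) / 2 * β * ‖w‖ ^ 2) ∧
      ((1 - 5 * Real.sqrt (δ / α)) / 2 * α * ‖w‖ ^ 2 ≤ ∑ i ∈ Sᶜ, ‖(inner ℂ w (v i) : ℂ)‖ ^ 2 ∧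
        ∑ i ∈ Sᶜ, ‖(inner ℂ w (v i) : ℂ)‖ ^ 2 ≤ (1 + 5 * Real.sqrt (δ / α)) / 2 * β * ‖w‖ ^ 2) :=
  stmt2_general n k δ α β hδ hα hMSS v hv hframe
end

section
/- Define sequences α_j, β_j by α₀ = β₀ = 1, α_{j+1} = α_j·(1 − 5√(δ/α_j))/2, β_{j+1} = β_j·(1 + 5√(δ/α_j))/2, where 0 < δ < 1/100. Then there exist an absolute constant C > 0 (independent of δ) and L ∈ ℕ such that α_j ≥ 100δ for all j ≤ L, 25δ ≤ α_{L+1} < 100δ, and β_{L+1} < C·α_{L+1}. -/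
/-- Lemma 1: behaviour of the recursively defined sequences `α_j, β_j`,
with a constant `C` independent of `δ`. -/
theorem stmt3 : ∃ C : ℝ, 0 < C ∧ ∀ δ : ℝ, 0 < δ → δ < 1 / 100 →
    ∀ α β : ℕ → ℝ, α 0 = 1 → β 0 = 1 →
      (∀ j, α (j + 1) = α j * (1 - 5 * Real.sqrt (δ / α j)) / 2) →
      (∀ j, β (j + 1) = β j * (1 + 5 * Real.sqrt (δ / α j)) / 2) →
      ∃ L : ℕ, (∀ j ≤ L, 100 * δ ≤ α j) ∧ 25 * δ ≤ α (L + 1) ∧ α (L + 1) < 100 * δ ∧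
        β (L + 1) < C * α (L + 1) := by
  classical
  refine ⟨Real.exp 7, Real.exp_pos 7, ?_⟩
  intro δ hδ0 hδ1 α β hα0 hβ0 hα hβ
  have sqrt_bound : ∀ j, 100 * δ ≤ α j → Real.sqrt (δ / α j) ≤ 1 / 10 := by
    intro j hj
    have hαj : (0:ℝ) < α j := lt_of_lt_of_le (by linarith) hj
    have h1 : δ / α j ≤ 1 / 100 := by
      rw [div_le_div_iff₀ hαj (by norm_num)]
      linarith
    calc Real.sqrt (δ / α j) ≤ Real.sqrt (1/100) := Real.sqrt_le_sqrt h1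
      _ = 1/10 := by
          rw [show (1/100 : ℝ) = (1/10)^2 by norm_num, Real.sqrt_sq (by norm_num)]
  have step_lb : ∀ j, 100 * δ ≤ α j → α j / 4 ≤ α (j+1) := by
    intro j hj
    have hy := sqrt_bound j hj
    have hαj : (0:ℝ) < α j := lt_of_lt_of_le (by linarith) hj
    rw [hα j]
    nlinarith [mul_nonneg hαj.le (sub_nonneg.mpr hy)]
  have step_ub : ∀ j, 100 * δ ≤ α j → α (j+1) ≤ α j / 2 := by
    intro j hj
    have hy : 0 ≤ Real.sqrt (δ / α j) := Real.sqrt_nonneg _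
    have hαj : (0:ℝ) < α j := lt_of_lt_of_le (by linarith) hj
    rw [hα j]
    nlinarith [mul_nonneg hαj.le hy]
  have hexist : ∃ n, α (n+1) < 100 * δ := by
    by_contra h
    push_neg at h
    have hAll : ∀ j, 100 * δ ≤ α j := by
      intro j
      cases j with
      | zero => rw [hα0]; linarith
      | succ m => exact h m
    have hdecay : ∀ n, α n ≤ (1/2:ℝ)^n := by
      intro n
      induction n with
      | zero => simp [hα0]
      | succ m ih =>
        calc α (m+1) ≤ α m / 2 := step_ub m (hAll m)
          _ ≤ (1/2:ℝ)^m / 2 := by linarith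
          _ = (1/2:ℝ)^(m+1) := by ring
    obtain ⟨n, hn⟩ := exists_pow_lt_of_lt_one (show (0:ℝ) < 100 * δ by linarith)
      (show (1:ℝ)/2 < 1 by norm_num)
    exact absurd (le_trans (hAll n) (hdecay n)) (not_le.mpr hn)
  set L := Nat.find hexist with hLdef
  have hL1 : α (L+1) < 100*δ := Nat.find_spec hexist
  have hle : ∀ j ≤ L, 100*δ ≤ α j := by
    intro j hj
    cases j with
    | zero => rw [hα0]; linarith
    | succ m =>
      have hm : m < L := hj
      exact le_of_not_gt (Nat.find_min hexist hm)
  have hαLpos : 0 < α L := lt_of_lt_of_le (by linarith) (hle L le_rfl)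
  have h25 : 25 * δ ≤ α (L+1) := by
    have h1 := step_lb L (hle L le_rfl)
    have h2 := hle L le_rfl
    linarith
  have hαL1 : 0 < α (L+1) := lt_of_lt_of_le (by linarith) h25
  -- the key invariant for β
  have hInv : ∀ j, j ≤ L → β j ≤ α j * Real.exp (50 * Real.sqrt (δ / α j)) := by
    intro j
    induction j with
    | zero =>
      intro _
      rw [hβ0, hα0, one_mul]
      exact Real.one_le_exp (by positivity)
    | succ m ih =>
      intro hj
      have hmL : m ≤ L := Nat.le_of_succ_le hj
      have hm := hle m hmL
      have hm1 := hle (m+1) hj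
      have hαm : 0 < α m := lt_of_lt_of_le (by linarith) hm
      have hαm1 : 0 < α (m+1) := lt_of_lt_of_le (by linarith) hm1
      set y := Real.sqrt (δ / α m) with hy_def
      set y' := Real.sqrt (δ / α (m+1)) with hy'_def
      have hy0 : 0 ≤ y := Real.sqrt_nonneg _
      have hy10 : y ≤ 1/10 := sqrt_bound m hm
      have hstep : α (m+1) ≤ α m / 2 := step_ub m hm
      have hratio : 2 * (δ / α m) ≤ δ / α (m+1) := by
        rw [show 2 * (δ / α m) = (2*δ) / α m by ring, div_le_div_iff₀ hαm hαm1]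
        nlinarith
      have hy' : Real.sqrt 2 * y ≤ y' := by
        calc Real.sqrt 2 * y = Real.sqrt (2 * (δ / α m)) :=
              (Real.sqrt_mul (by norm_num) _).symm
          _ ≤ y' := Real.sqrt_le_sqrt hratio
      have h14 : (1.4:ℝ) ≤ Real.sqrt 2 := by
        nlinarith [Real.sq_sqrt (show (0:ℝ) ≤ 2 by norm_num), Real.sqrt_nonneg 2]
      have hy14 : 1.4 * y ≤ y' :=
        le_trans (mul_le_mul_of_nonneg_right h14 hy0) hy'
      have hkey : (1 + 5*y) * Real.exp (50*y) ≤ (1 - 5*y) * Real.exp (50*y') := by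
        have h1 : Real.exp (50*y) * Real.exp (20*y) ≤ Real.exp (50*y') := by
          rw [← Real.exp_add]
          exact Real.exp_le_exp.mpr (by nlinarith)
        have h2 : 1 + 20*y ≤ Real.exp (20*y) := by
          have := Real.add_one_le_exp (20*y); linarith
        have h3 : (1 + 5*y) ≤ (1 - 5*y) * (1 + 20*y) := by nlinarith
        calc (1+5*y) * Real.exp (50*y) ≤ (1-5*y)*(1+20*y)*Real.exp (50*y) :=
              mul_le_mul_of_nonneg_right h3 (Real.exp_pos _).le
          _ = (1-5*y) * ((1+20*y) * Real.exp (50*y)) := by ring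
          _ ≤ (1-5*y) * (Real.exp (20*y) * Real.exp (50*y)) := by
              refine mul_le_mul_of_nonneg_left ?_ (by linarith)
              exact mul_le_mul_of_nonneg_right h2 (Real.exp_pos _).le
          _ = (1-5*y) * (Real.exp (50*y) * Real.exp (20*y)) := by ring
          _ ≤ (1-5*y) * Real.exp (50*y') :=
              mul_le_mul_of_nonneg_left h1 (by linarith)
      have ihm := ih hmL
      have e1 : β (m+1) ≤ α m * Real.exp (50*y) * (1+5*y) / 2 := by
        rw [hβ m, ← hy_def]
        have h2 : (0:ℝ) ≤ 1 + 5*y := by linarith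
        have := mul_le_mul_of_nonneg_right ihm h2
        linarith
      have e2 : α m * Real.exp (50*y) * (1+5*y) / 2 ≤ α (m+1) * Real.exp (50*y') := by
        have h := mul_le_mul_of_nonneg_left hkey (by linarith : (0:ℝ) ≤ α m / 2)
        calc α m * Real.exp (50*y) * (1+5*y)/2
            = α m / 2 * ((1+5*y)*Real.exp (50*y)) := by ring
          _ ≤ α m / 2 * ((1-5*y)*Real.exp (50*y')) := h
          _ = (α m * (1-5*y)/2) * Real.exp (50*y') := by ring
          _ = α (m+1) * Real.exp (50*y') := by rw [hα m, ← hy_def]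
      exact e1.trans e2
  -- conclude
  have hβL := hInv L le_rfl
  have hyL := sqrt_bound L (hle L le_rfl)
  have hyL0 : 0 ≤ Real.sqrt (δ / α L) := Real.sqrt_nonneg _
  have hb1 : β (L+1) ≤ 3/4 * Real.exp 5 * α L := by
    rw [hβ L]
    have h1 : β L ≤ α L * Real.exp 5 := by
      refine hβL.trans ?_
      have h : Real.exp (50 * Real.sqrt (δ / α L)) ≤ Real.exp 5 :=
        Real.exp_le_exp.mpr (by linarith)
      exact mul_le_mul_of_nonneg_left h hαLpos.le
    have h2 : (0:ℝ) ≤ (1 + 5 * Real.sqrt (δ / α L)) / 2 := by linarith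
    have h3 : (1 + 5 * Real.sqrt (δ / α L)) / 2 ≤ 3/4 := by linarith
    calc β L * (1 + 5 * Real.sqrt (δ / α L)) / 2
        = β L * ((1 + 5 * Real.sqrt (δ / α L)) / 2) := by ring
      _ ≤ (α L * Real.exp 5) * (3/4) :=
          mul_le_mul h1 h3 h2 (by positivity)
      _ = 3/4 * Real.exp 5 * α L := by ring
  have hαL4 : α L ≤ 4 * α (L+1) := by
    have := step_lb L (hle L le_rfl); linarith
  have hb2 : β (L+1) ≤ 3 * Real.exp 5 * α (L+1) := by
    calc β (L+1) ≤ 3/4 * Real.exp 5 * α L := hb1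
      _ ≤ 3/4 * Real.exp 5 * (4 * α (L+1)) :=
          mul_le_mul_of_nonneg_left hαL4 (by positivity)
      _ = 3 * Real.exp 5 * α (L+1) := by ring
  have hC : 3 * Real.exp 5 < Real.exp 7 := by
    have h1 : Real.exp 7 = Real.exp 2 * Real.exp 5 := by
      rw [← Real.exp_add]; norm_num
    have h2 : (3:ℝ) < Real.exp 2 := by
      have := Real.add_one_lt_exp (show (2:ℝ) ≠ 0 by norm_num); linarith
    nlinarith [Real.exp_pos 5]
  exact ⟨L, hle, h25, hL1, lt_of_le_of_lt hb2 (mul_lt_mul_of_pos_right hC hαL1)⟩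
end

section
/- There exist absolute positive constants c₀, C₀ such that: whenever u₁,…,u_m ∈ ℂⁿ satisfy ‖u_i‖² = n/m for all i and ∑_{i=1}^m |⟨w,u_i⟩|² = ‖w‖² for all w ∈ ℂⁿ, there is a subset J ⊂ {1,…,m} with c₀·(n/m)·‖w‖² ≤ ∑_{i∈J} |⟨w,u_i⟩|² ≤ C₀·(n/m)·‖w‖² for all w ∈ ℂⁿ. (The Marcus–Spielman–Srivastava partition theorem may be assumed as a hypothesis.) -/
/-!
If a sub-family `(u i)_{i ∈ J}` has frame bounds `a ≤ b` and `‖u i‖² ≤ ε`, whitening it by the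
inverse square root of its frame operator gives a Parseval frame with squared norms at most
`ε / a`. MSS splits that frame into two halves, and undoing the whitening yields `S ⊆ J` with
frame bounds `(1 - β) a` and `β b`, where `β = (1 + √(2ε/a))² / 2 ≈ 1/2`.

Starting from the whole Parseval frame, after `k` halvings the bounds are
`(1 ± 30 √(2ᵏ ε)) / 2ᵏ`: the relative errors `√(2ʲ ε)` grow geometrically, so their sum stays
proportional to the last one. Stopping when `2ᵏ ε ≈ 10⁻⁴` gives bounds of order `ε = n / m`.
-/

open Finset InnerProductSpace
open scoped InnerProductSpace

section Spectral

variable {𝕜 E ι : Type*} [RCLike 𝕜] [NormedAddCommGroup E] [InnerProductSpace 𝕜 E]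

lemma isSymmetric_sum_smul_rankOne [Fintype ι] (v : ι → E) (μ : ι → ℝ) :
    ((∑ j, (μ j : 𝕜) • rankOne 𝕜 (v j) (v j) : E →L[𝕜] E) : E →ₗ[𝕜] E).IsSymmetric := by
  rw [ContinuousLinearMap.toLinearMap_sum]
  exact LinearMap.isSymmetric_sum _ fun j _ =>
    (isSymmetric_rankOne_self (v j)).smul (RCLike.conj_ofReal _)

lemma OrthonormalBasis.inner_sum_smul_rankOne_apply [Fintype ι] (e : OrthonormalBasis ι 𝕜 E)
    (μ : ι → 𝕜) (k : ι) (x : E) :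
    ⟪e k, (∑ j, μ j • rankOne 𝕜 (e j) (e j)) x⟫_𝕜 = μ k * ⟪e k, x⟫_𝕜 := by
  classical
  simp [_root_.sum_apply, inner_sum, inner_smul_right, e.inner_eq_ite]

lemma LinearMap.IsSymmetric.re_inner_apply_self_eq_sum [FiniteDimensional 𝕜 E] {n : ℕ}
    {T : E →ₗ[𝕜] E} (hT : T.IsSymmetric) (hn : Module.finrank 𝕜 E = n) (x : E) :
    RCLike.re ⟪x, T x⟫_𝕜 =
      ∑ j, hT.eigenvalues hn j * ‖⟪hT.eigenvectorBasis hn j, x⟫_𝕜‖ ^ 2 := by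
  have hTx : T x = ∑ j, (hT.eigenvalues hn j * ⟪hT.eigenvectorBasis hn j, x⟫_𝕜) •
      hT.eigenvectorBasis hn j := by
    conv_lhs => rw [← (hT.eigenvectorBasis hn).sum_repr' x]
    simp only [map_sum, map_smul, hT.apply_eigenvectorBasis, smul_smul, mul_comm]
  rw [hTx, inner_sum, map_sum]
  refine sum_congr rfl fun j _ => ?_
  rw [inner_smul_right, mul_assoc, ← inner_conj_symm x, RCLike.mul_conj, ← RCLike.ofReal_pow,
    ← RCLike.ofReal_mul, RCLike.ofReal_re]

end Spectral

section Frames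

variable (𝕜 : Type*) {E ι : Type*} [RCLike 𝕜] [NormedAddCommGroup E] [InnerProductSpace 𝕜 E]

noncomputable def frameSum (u : ι → E) (J : Finset ι) (w : E) : ℝ :=
  ∑ i ∈ J, ‖⟪w, u i⟫_𝕜‖ ^ 2

def HasFrameBounds (u : ι → E) (J : Finset ι) (a b : ℝ) : Prop :=
  ∀ w : E, a * ‖w‖ ^ 2 ≤ frameSum 𝕜 u J w ∧ frameSum 𝕜 u J w ≤ b * ‖w‖ ^ 2

noncomputable def frameOp (u : ι → E) (J : Finset ι) : E →L[𝕜] E :=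
  ∑ i ∈ J, rankOne 𝕜 (u i) (u i)

lemma isSymmetric_frameOp (u : ι → E) (J : Finset ι) :
    (frameOp 𝕜 u J : E →ₗ[𝕜] E).IsSymmetric :=
  (ContinuousLinearMap.isPositive_sum J fun i _ => isPositive_rankOne_self (u i)).isSymmetric

variable {𝕜}

lemma HasFrameBounds.mono {u : ι → E} {J : Finset ι} {a b a' b' : ℝ}
    (h : HasFrameBounds 𝕜 u J a b) (ha : a' ≤ a) (hb : b ≤ b') : HasFrameBounds 𝕜 u J a' b' :=
  fun w => ⟨(mul_le_mul_of_nonneg_right ha (sq_nonneg _)).trans (h w).1,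
    (h w).2.trans (mul_le_mul_of_nonneg_right hb (sq_nonneg _))⟩

lemma hasFrameBounds_univ_of_parseval [Fintype ι] {u : ι → E}
    (hpar : ∀ w, frameSum 𝕜 u univ w = ‖w‖ ^ 2) : HasFrameBounds 𝕜 u univ 1 1 :=
  fun w => by simp [hpar]

lemma frameSum_zero (u : ι → E) (J : Finset ι) : frameSum 𝕜 u J 0 = 0 := by
  simp [frameSum]

lemma inner_frameOp_self (u : ι → E) (J : Finset ι) (w : E) :
    ⟪w, frameOp 𝕜 u J w⟫_𝕜 = frameSum 𝕜 u J w := by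
  simp only [frameOp, frameSum, _root_.sum_apply, rankOne_apply, inner_sum,
    inner_smul_right, RCLike.ofReal_sum, RCLike.ofReal_pow]
  refine sum_congr rfl fun i _ => ?_
  rw [← inner_conj_symm, RCLike.conj_mul]

variable [FiniteDimensional 𝕜 E]

lemma frameSum_eq_sum_eigenvalues (u : ι → E) (J : Finset ι) (w : E) :
    frameSum 𝕜 u J w = ∑ j, (isSymmetric_frameOp 𝕜 u J).eigenvalues rfl j *
      ‖⟪(isSymmetric_frameOp 𝕜 u J).eigenvectorBasis rfl j, w⟫_𝕜‖ ^ 2 := by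
  rw [← (isSymmetric_frameOp 𝕜 u J).re_inner_apply_self_eq_sum, ContinuousLinearMap.coe_coe,
    inner_frameOp_self, RCLike.ofReal_re]

lemma exists_isSymmetric_frameSum_apply_eq (u : ι → E) (J : Finset ι)
    (hpos : ∀ w, w ≠ 0 → 0 < frameSum 𝕜 u J w) :
    ∃ A : E →L[𝕜] E, (A : E →ₗ[𝕜] E).IsSymmetric ∧ ∀ x, frameSum 𝕜 u J (A x) = ‖x‖ ^ 2 := by
  set e := (isSymmetric_frameOp 𝕜 u J).eigenvectorBasis rfl
  set lam := (isSymmetric_frameOp 𝕜 u J).eigenvalues rfl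
  have hquad : ∀ w, frameSum 𝕜 u J w = ∑ j, lam j * ‖⟪e j, w⟫_𝕜‖ ^ 2 :=
    frameSum_eq_sum_eigenvalues u J
  have hlam : ∀ j, 0 < lam j := fun j => by
    classical
    simpa [hquad, e.inner_eq_ite, apply_ite (fun z : 𝕜 => ‖z‖ ^ 2)] using
      hpos (e j) (e.orthonormal.ne_zero j)
  refine ⟨∑ j, (((√(lam j))⁻¹ : ℝ) : 𝕜) • rankOne 𝕜 (e j) (e j),
    isSymmetric_sum_smul_rankOne _ _, fun x => ?_⟩
  rw [hquad, ← e.sum_sq_norm_inner_right x]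
  refine sum_congr rfl fun j _ => ?_
  rw [e.inner_sum_smul_rankOne_apply, norm_mul, mul_pow, RCLike.norm_ofReal, sq_abs, inv_pow,
    Real.sq_sqrt (hlam j).le, mul_inv_cancel_left₀ (hlam j).ne']

end Frames

def MSSPartition : Prop :=
  ∀ (n m : ℕ) (ε : ℝ), 0 < ε → ∀ u : Fin m → EuclideanSpace ℂ (Fin n),
    (∀ i, ‖u i‖ ^ 2 ≤ ε) → (∀ w, frameSum ℂ u univ w = ‖w‖ ^ 2) →
    ∃ S : Finset (Fin m), ∀ w,
      frameSum ℂ u S w ≤ (1 + √(2 * ε)) ^ 2 / 2 * ‖w‖ ^ 2 ∧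
      frameSum ℂ u Sᶜ w ≤ (1 + √(2 * ε)) ^ 2 / 2 * ‖w‖ ^ 2

lemma exists_subset_frameSum_le_of_mss (hMSS : MSSPartition) {n m : ℕ}
    (u : Fin m → EuclideanSpace ℂ (Fin n)) (T : Finset (Fin m)) {a ε : ℝ} (ha : 0 < a)
    (hε : 0 < ε) (hlow : ∀ w, a * ‖w‖ ^ 2 ≤ frameSum ℂ u T w) (hnorm : ∀ i ∈ T, ‖u i‖ ^ 2 ≤ ε) :
    ∃ S ⊆ T, ∀ w,
      frameSum ℂ u S w ≤ (1 + √(2 * (ε / a))) ^ 2 / 2 * frameSum ℂ u T w ∧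
      frameSum ℂ u (T \ S) w ≤ (1 + √(2 * (ε / a))) ^ 2 / 2 * frameSum ℂ u T w := by
  obtain ⟨A, hAsymm, hA⟩ := exists_isSymmetric_frameSum_apply_eq u T fun w hw =>
    (mul_pos ha (by positivity)).trans_le (hlow w)
  have hA_norm : ∀ x, ‖A x‖ ^ 2 ≤ ‖x‖ ^ 2 / a := fun x =>
    (le_div_iff₀' ha).mpr ((hlow (A x)).trans_eq (hA x))
  have hA_surj : Function.Surjective A := by
    refine LinearMap.injective_iff_surjective.mp ((injective_iff_map_eq_zero A.toLinearMap).mpr ?_)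
    intro x hx
    have hAx : A x = 0 := hx
    simpa [hAx, frameSum_zero] using (hA x).symm
  -- Padding with zero vectors outside `T` lets MSS be applied to the whitened family as is.
  set v : Fin m → EuclideanSpace ℂ (Fin n) := fun i => if i ∈ T then A (u i) else 0
  have hv : ∀ S x, frameSum ℂ v S x = frameSum ℂ u (S ∩ T) (A x) := fun S x => by
    simp only [frameSum, v, apply_ite (fun y => ‖⟪x, y⟫_ℂ‖ ^ 2), inner_zero_right, norm_zero,
      zero_pow two_ne_zero, sum_ite_mem, hAsymm.apply_clm]
  have hv_norm : ∀ i, ‖v i‖ ^ 2 ≤ ε / a := fun i => by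
    by_cases hi : i ∈ T
    · simpa [v, hi] using (hA_norm (u i)).trans (div_le_div_of_nonneg_right (hnorm i hi) ha.le)
    · simpa [v, hi] using (div_pos hε ha).le
  have hv_parseval : ∀ x, frameSum ℂ v univ x = ‖x‖ ^ 2 := fun x => by
    rw [hv, univ_inter, hA]
  obtain ⟨S, hS⟩ := hMSS n m (ε / a) (div_pos hε ha) v hv_norm hv_parseval
  refine ⟨S ∩ T, inter_subset_right, fun w => ?_⟩
  obtain ⟨x, rfl⟩ := hA_surj w
  have hcompl : T \ (S ∩ T) = Sᶜ ∩ T := by ext; simp [and_comm]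
  rw [hA, ← hv, hcompl, ← hv]
  exact hS x

lemma HasFrameBounds.exists_halving (hMSS : MSSPartition) {n m : ℕ}
    {u : Fin m → EuclideanSpace ℂ (Fin n)} {T : Finset (Fin m)} {a b ε : ℝ}
    (hT : HasFrameBounds ℂ u T a b) (ha : 0 < a) (hε : 0 < ε) (hnorm : ∀ i ∈ T, ‖u i‖ ^ 2 ≤ ε)
    (hβ : (1 + √(2 * (ε / a))) ^ 2 / 2 ≤ 1) :
    ∃ S, HasFrameBounds ℂ u S ((1 - (1 + √(2 * (ε / a))) ^ 2 / 2) * a)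
      ((1 + √(2 * (ε / a))) ^ 2 / 2 * b) := by
  obtain ⟨S, hST, hS⟩ := exists_subset_frameSum_le_of_mss hMSS u T ha hε (fun w => (hT w).1) hnorm
  set β := (1 + √(2 * (ε / a))) ^ 2 / 2
  refine ⟨S, fun w => ?_⟩
  have hsplit : frameSum ℂ u (T \ S) w + frameSum ℂ u S w = frameSum ℂ u T w := sum_sdiff hST
  have hlow := mul_le_mul_of_nonneg_left (hT w).1 (sub_nonneg.mpr hβ)
  have hup := mul_le_mul_of_nonneg_left (hT w).2 (by positivity : 0 ≤ β)
  constructor <;> linarith [hS w]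

-- With `t = √(2ᵏ ε)`, `a = (1 - 30 t) / 2ᵏ` and `s = √(2 ε / a)`, these say that one MSS step
-- turns the bounds `(1 ± 30 t) / 2ᵏ` into `(1 ± 30 √2 t) / 2ᵏ⁺¹`.
lemma halving_inequalities {t s : ℝ} (ht : 0 ≤ t) (ht' : t ^ 2 ≤ 1 / 20000) (hs : 0 ≤ s)
    (hst : s ^ 2 * (1 - 30 * t) = 2 * t ^ 2) :
    (1 + s) ^ 2 / 2 ≤ 1 ∧
      (1 - 30 * (√2 * t)) / 2 ≤ (1 - (1 + s) ^ 2 / 2) * (1 - 30 * t) ∧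
      (1 + s) ^ 2 / 2 * (1 + 30 * t) ≤ (1 + 30 * (√2 * t)) / 2 := by
  have hsqrt2 : 141 / 100 ≤ √2 ∧ √2 ≤ 3 / 2 := by
    constructor <;> nlinarith [Real.sq_sqrt (show (0 : ℝ) ≤ 2 by norm_num), Real.sqrt_nonneg 2]
  have ht100 : t ≤ 1 / 100 := by nlinarith
  have hs_le : s ≤ 7 / 4 * t := by
    nlinarith [mul_nonneg (sq_nonneg s) (show (0 : ℝ) ≤ 3 / 10 - 30 * t by linarith)]
  have hr : 141 / 100 * t ≤ √2 * t ∧ √2 * t ≤ 3 / 2 * t :=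
    ⟨mul_le_mul_of_nonneg_right hsqrt2.1 ht, mul_le_mul_of_nonneg_right hsqrt2.2 ht⟩
  refine ⟨by nlinarith, by nlinarith, by nlinarith⟩

lemma exists_hasFrameBounds_two_pow (hMSS : MSSPartition) {n m : ℕ}
    {u : Fin m → EuclideanSpace ℂ (Fin n)} (hpar : ∀ w, frameSum ℂ u univ w = ‖w‖ ^ 2) {ε : ℝ}
    (hε : 0 < ε) (hnorm : ∀ i, ‖u i‖ ^ 2 ≤ ε) (k : ℕ) (hk : 2 ^ k * ε ≤ 1 / 10000) :
    ∃ J, HasFrameBounds ℂ u J ((1 - 30 * √(2 ^ k * ε)) / 2 ^ k)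
      ((1 + 30 * √(2 ^ k * ε)) / 2 ^ k) := by
  induction k with
  | zero =>
    exact ⟨univ, (hasFrameBounds_univ_of_parseval hpar).mono (by simp) (by simp)⟩
  | succ k ih =>
    have h2k : (0 : ℝ) < 2 ^ k := by positivity
    have hk' : 2 ^ k * ε ≤ 1 / 20000 := by rw [pow_succ] at hk; linarith
    obtain ⟨J, hJ⟩ := ih (by linarith)
    set t := √(2 ^ k * ε)
    have ht2 : t ^ 2 = 2 ^ k * ε := Real.sq_sqrt (by positivity)
    set a := (1 - 30 * t) / 2 ^ k
    have ha : 0 < a := div_pos (by nlinarith [Real.sqrt_nonneg (2 ^ k * ε)]) (by positivity)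
    set s := √(2 * (ε / a))
    have hst : s ^ 2 * (1 - 30 * t) = 2 * t ^ 2 := by
      rw [Real.sq_sqrt (by positivity), ht2]
      field_simp
      exact (div_mul_cancel₀ _ h2k.ne').symm
    obtain ⟨hβ, hlow, hup⟩ :=
      halving_inequalities (Real.sqrt_nonneg _) (by rw [ht2]; exact hk') (Real.sqrt_nonneg _) hst
    obtain ⟨S, hS⟩ := hJ.exists_halving hMSS ha hε (fun i _ => hnorm i) hβ
    have hsqrt : √(2 ^ (k + 1) * ε) = √2 * t := by
      rw [pow_succ, mul_comm _ 2, mul_assoc, Real.sqrt_mul zero_le_two]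
    refine ⟨S, hS.mono ?_ ?_⟩ <;> rw [hsqrt, pow_succ (2 : ℝ) k, mul_comm _ 2, ← div_div]
    · calc (1 - 30 * (√2 * t)) / 2 / 2 ^ k ≤ (1 - (1 + s) ^ 2 / 2) * (1 - 30 * t) / 2 ^ k :=
            div_le_div_of_nonneg_right hlow h2k.le
        _ = _ := mul_div_assoc _ _ _
    · calc (1 + s) ^ 2 / 2 * ((1 + 30 * t) / 2 ^ k) = (1 + s) ^ 2 / 2 * (1 + 30 * t) / 2 ^ k :=
            (mul_div_assoc _ _ _).symm
        _ ≤ _ := div_le_div_of_nonneg_right hup h2k.le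

lemma exists_hasFrameBounds_const_mul_of_small (hMSS : MSSPartition) {n m : ℕ}
    {u : Fin m → EuclideanSpace ℂ (Fin n)} (hpar : ∀ w, frameSum ℂ u univ w = ‖w‖ ^ 2) {ε : ℝ}
    (hε : 0 < ε) (hε' : ε ≤ 1 / 10000) (hnorm : ∀ i, ‖u i‖ ^ 2 ≤ ε) :
    ∃ J, HasFrameBounds ℂ u J (7000 * ε) (26000 * ε) := by
  obtain ⟨k, hk, hk'⟩ := exists_nat_pow_near (x := 1 / (10000 * ε))
    ((one_le_div (by positivity)).mpr (by linarith)) one_lt_two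
  rw [le_div_iff₀ (by positivity)] at hk
  rw [div_lt_iff₀ (by positivity), pow_succ] at hk'
  obtain ⟨J, hJ⟩ := exists_hasFrameBounds_two_pow hMSS hpar hε hnorm k (by linarith)
  have h2k : (0 : ℝ) < 2 ^ k := by positivity
  have ht : √(2 ^ k * ε) ≤ 1 / 100 :=
    Real.sqrt_le_iff.mpr ⟨by norm_num, by linarith⟩
  refine ⟨J, hJ.mono ?_ ?_⟩
  · rw [le_div_iff₀ h2k]; nlinarith
  · rw [div_le_iff₀ h2k]; nlinarith [Real.sqrt_nonneg (2 ^ k * ε)]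

/-- Lemma 2: assuming the MSS partition theorem, there are absolute
constants `c₀, C₀` such that any Parseval frame of equal-norm vectors contains a
sub-family which is a frame with bounds `c₀ n/m` and `C₀ n/m`. -/
theorem stmt6
    (hMSS : ∀ (n m : ℕ) (ε : ℝ), 0 < ε → ∀ u : Fin m → EuclideanSpace ℂ (Fin n),
      (∀ i, ‖u i‖ ^ 2 ≤ ε) →
      (∀ w : EuclideanSpace ℂ (Fin n), ∑ i, ‖(inner ℂ w (u i) : ℂ)‖ ^ 2 = ‖w‖ ^ 2) →
      ∃ S : Finset (Fin m), ∀ w : EuclideanSpace ℂ (Fin n),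
        (∑ i ∈ S, ‖(inner ℂ w (u i) : ℂ)‖ ^ 2 ≤ (1 + Real.sqrt (2 * ε)) ^ 2 / 2 * ‖w‖ ^ 2) ∧
        (∑ i ∈ Sᶜ, ‖(inner ℂ w (u i) : ℂ)‖ ^ 2 ≤ (1 + Real.sqrt (2 * ε)) ^ 2 / 2 * ‖w‖ ^ 2)) :
    ∃ c₀ C₀ : ℝ, 0 < c₀ ∧ 0 < C₀ ∧
      ∀ (n m : ℕ), 0 < n → n ≤ m → ∀ u : Fin m → EuclideanSpace ℂ (Fin n),
        (∀ i, ‖u i‖ ^ 2 = (n : ℝ) / m) →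
        (∀ w : EuclideanSpace ℂ (Fin n), ∑ i, ‖(inner ℂ w (u i) : ℂ)‖ ^ 2 = ‖w‖ ^ 2) →
        ∃ J : Finset (Fin m), ∀ w : EuclideanSpace ℂ (Fin n),
          c₀ * ((n : ℝ) / m) * ‖w‖ ^ 2 ≤ ∑ i ∈ J, ‖(inner ℂ w (u i) : ℂ)‖ ^ 2 ∧
          ∑ i ∈ J, ‖(inner ℂ w (u i) : ℂ)‖ ^ 2 ≤ C₀ * ((n : ℝ) / m) * ‖w‖ ^ 2 := by
  refine ⟨1, 26000, one_pos, by norm_num, fun n m hn hnm u hnorm hpar => ?_⟩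
  have hm : 0 < m := hn.trans_le hnm
  have hε : (0 : ℝ) < n / m := by positivity
  have hε1 : (n : ℝ) / m ≤ 1 := div_le_one_of_le₀ (Nat.cast_le.mpr hnm) (Nat.cast_nonneg m)
  by_cases hsmall : (n : ℝ) / m ≤ 1 / 10000
  · obtain ⟨J, hJ⟩ :=
      exists_hasFrameBounds_const_mul_of_small hMSS hpar hε hsmall fun i => (hnorm i).le
    exact ⟨J, hJ.mono (by linarith) le_rfl⟩
  · exact ⟨univ, (hasFrameBounds_univ_of_parseval hpar).mono (by linarith) (by linarith)⟩
end

section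
/- If Λ_j ⊂ ℝ is a sequence of sets with d(Λ_j) ≥ d > 0 for all j, then there is a subsequence which converges weakly to some (possibly empty) set Λ with d(Λ) ≥ d. -/
/-!
Encode each set `Λ_j` by its distance function truncated at `1`: these are `1`-Lipschitz with
values in `[0, 1]`, so a diagonal (Arzelà–Ascoli type) argument yields a subsequence converging
pointwise to some `L`, and we take `Λ = {L = 0}`. Every zero of `L` is approached by points of the
`Λ_j`, which passes the separation on to `Λ`; conversely every limit of points of the `Λ_j` is a zero
of `L`, and compactness of `[a, b]` turns this into the uniform inclusion
`Λ_j ∩ (a, b) ⊆ Λ + (-ε, ε)` (with `a, b ∉ Λ` keeping the limit point inside `(a, b)`). The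
reverse inclusion holds uniformly because `Λ ∩ (a, b)` is finite.
-/

open MeasureTheory ENNReal Filter

/-- The (inverse) Fourier transform with the paper's normalization:
`f(x) = (2π)^{-1/2} ∫ e^{-itx} F(t) dt`. -/
noncomputable def FT (F : ℝ → ℂ) (x : ℝ) : ℂ :=
  (Real.sqrt (2 * Real.pi) : ℂ)⁻¹ * ∫ t : ℝ, Complex.exp (-(Complex.I * t * x)) * F t

/-- `f` belongs to the Paley–Wiener space `PW_Ω`: it is the Fourier transform of an
`L²` function `F` vanishing outside `Ω` (such `F` is automatically integrable when
`Ω` has finite measure, so `f` is continuous and pointwise evaluation makes sense). -/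
def IsPW (Ω : Set ℝ) (f : ℝ → ℂ) : Prop :=
  ∃ F : ℝ → ℂ, MemLp F 2 volume ∧ (∀ t ∉ Ω, F t = 0) ∧ Integrable F volume ∧
    ∀ x, f x = FT F x

/-- `Λ ⊆ ℝ` has separation constant at least `δ`. -/
def Separated (δ : ℝ) (Λ : Set ℝ) : Prop :=
  ∀ x ∈ Λ, ∀ y ∈ Λ, x ≠ y → δ ≤ |x - y|

/-- `Λ` is the weak limit of the sequence of sets `Λs j`: for every `ε > 0` and
every interval `(a, b)` with `a, b ∉ Λ`, the inclusions
`Λs j ∩ (a,b) ⊆ (Λ ∩ (a,b)) + (-ε,ε)` and `Λ ∩ (a,b) ⊆ (Λs j ∩ (a,b)) + (-ε,ε)`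
hold for all but finitely many `j`. -/
def WeakLim (Λs : ℕ → Set ℝ) (Λ : Set ℝ) : Prop :=
  ∀ ε > (0 : ℝ), ∀ a b : ℝ, a ∉ Λ → b ∉ Λ →
    ∀ᶠ j in atTop,
      (∀ x ∈ Λs j ∩ Set.Ioo a b, ∃ y ∈ Λ ∩ Set.Ioo a b, |x - y| < ε) ∧
      (∀ y ∈ Λ ∩ Set.Ioo a b, ∃ x ∈ Λs j ∩ Set.Ioo a b, |y - x| < ε)

open Topology Metric

section TruncInfDist

variable {X : Type*} [PseudoMetricSpace X]

/-- Truncating at `1` keeps the value finite when `S = ∅` (where `infEDist x S = ⊤`); note that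
`Metric.infDist x ∅ = 0` would wrongly make the empty set look like everything. -/
noncomputable def truncInfDist (S : Set X) (x : X) : ℝ := (min (infEDist x S) 1).toReal

lemma truncInfDist_mem_Icc (S : Set X) (x : X) : truncInfDist S x ∈ Set.Icc (0 : ℝ) 1 :=
  ⟨ENNReal.toReal_nonneg, ENNReal.toReal_le_of_le_ofReal zero_le_one (by simp)⟩

lemma lipschitzWith_truncInfDist (S : Set X) : LipschitzWith 1 (truncInfDist S) := by
  refine LipschitzWith.of_le_add fun x y => ?_
  have hfin : min (infEDist y S) 1 ≠ ⊤ := ne_top_of_le_ne_top ENNReal.one_ne_top (min_le_right _ _)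
  have h : min (infEDist x S) 1 ≤ min (infEDist y S) 1 + edist x y :=
    calc min (infEDist x S) 1 ≤ min (infEDist y S + edist x y) (1 + edist x y) :=
          min_le_min infEDist_le_infEDist_add_edist le_self_add
      _ = min (infEDist y S) 1 + edist x y := min_add_add_right _ _ _
  calc truncInfDist S x ≤ (min (infEDist y S) 1 + edist x y).toReal :=
        ENNReal.toReal_mono (ENNReal.add_ne_top.2 ⟨hfin, edist_ne_top x y⟩) h
    _ = truncInfDist S y + dist x y := by
        rw [ENNReal.toReal_add hfin (edist_ne_top x y), ← dist_edist]; rfl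

lemma truncInfDist_eq_zero_of_mem {S : Set X} {x : X} (h : x ∈ S) : truncInfDist S x = 0 := by
  simp [truncInfDist, infEDist_zero_of_mem h]

lemma exists_dist_lt_of_truncInfDist_lt {S : Set X} {x : X} {ε : ℝ} (h : truncInfDist S x < ε)
    (hε : ε ≤ 1) : ∃ p ∈ S, dist x p < ε := by
  have hfin : min (infEDist x S) 1 ≠ ⊤ := ne_top_of_le_ne_top ENNReal.one_ne_top (min_le_right _ _)
  rcases min_lt_iff.1 ((ENNReal.lt_ofReal_iff_toReal_lt hfin).2 h) with hlt | hlt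
  · obtain ⟨p, hp, hpx⟩ := infEDist_lt_iff.1 hlt
    exact ⟨p, hp, edist_lt_ofReal.1 hpx⟩
  · exact absurd (ENNReal.ofReal_le_one.2 hε) (not_le.2 hlt)

lemma eventually_exists_dist_lt_of_tendsto_truncInfDist {S : ℕ → Set X} {x : X}
    (hx : Tendsto (fun j => truncInfDist (S j) x) atTop (𝓝 0)) {ε : ℝ} (hε : 0 < ε) :
    ∀ᶠ j in atTop, ∃ p ∈ S j, dist x p < ε := by
  filter_upwards [hx.eventually_lt_const (lt_min hε one_pos)] with j hj
  obtain ⟨p, hp, hxp⟩ := exists_dist_lt_of_truncInfDist_lt hj (min_le_right _ _)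
  exact ⟨p, hp, hxp.trans_le (min_le_left _ _)⟩

lemma tendsto_truncInfDist_of_tendsto_mem {S : ℕ → Set X} {x : ℕ → X} {x₀ : X}
    (hmem : ∀ m, x m ∈ S m) (hx : Tendsto x atTop (𝓝 x₀)) :
    Tendsto (fun m => truncInfDist (S m) x₀) atTop (𝓝 0) := by
  refine squeeze_zero (fun m => (truncInfDist_mem_Icc _ _).1) (fun m => ?_)
    (tendsto_iff_dist_tendsto_zero.1 hx)
  have := (lipschitzWith_truncInfDist (S m)).dist_le_mul x₀ (x m)
  simp only [truncInfDist_eq_zero_of_mem (hmem m), NNReal.coe_one, one_mul, Real.dist_eq,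
    sub_zero] at this
  rw [dist_comm]
  exact (le_abs_self _).trans this

end TruncInfDist

section Equicontinuous

variable {X α : Type*} [TopologicalSpace X] [PseudoMetricSpace α]

lemma EquicontinuousAt.cauchySeq_of_mem_closure {F : ℕ → X → α} {s : Set X} {x : X}
    (hF : EquicontinuousAt F x) (hx : x ∈ closure s) (hs : ∀ y ∈ s, CauchySeq (F · y)) :
    CauchySeq (F · x) := by
  refine Metric.cauchySeq_iff.2 fun ε hε => ?_
  obtain ⟨y, hy, hnear⟩ := ((mem_closure_iff_frequently.1 hx).and_eventually
    (Metric.equicontinuousAt_iff_right.1 hF (ε / 3) (by positivity))).exists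
  obtain ⟨N, hN⟩ := Metric.cauchySeq_iff.1 (hs y hy) (ε / 3) (by positivity)
  refine ⟨N, fun m hm n hn => ?_⟩
  calc dist (F m x) (F n x) ≤ dist (F m x) (F m y) + dist (F m y) (F n y) + dist (F n y) (F n x) :=
        dist_triangle4 _ _ _ _
    _ < ε / 3 + ε / 3 + ε / 3 := by
        gcongr
        · exact hnear m
        · exact hN m hm n hn
        · rw [dist_comm]; exact hnear n
    _ = ε := by ring

/-- Extract a subsequence converging on a countable dense set (a compact metrizable product of
copies of `K`); equicontinuity then spreads the Cauchy property to its closure. -/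
theorem Equicontinuous.exists_subseq_tendsto [TopologicalSpace.SeparableSpace X] {F : ℕ → X → α}
    (hF : Equicontinuous F) {K : Set α} (hK : IsCompact K) (hFK : ∀ j x, F j x ∈ K) :
    ∃ φ : ℕ → ℕ, StrictMono φ ∧ ∃ g : X → α, ∀ x, Tendsto (fun j => F (φ j) x) atTop (𝓝 (g x)) := by
  obtain ⟨s, hsc, hsd⟩ := TopologicalSpace.exists_countable_dense X
  have : Countable s := hsc.to_subtype
  have : CompactSpace K := isCompact_iff_compactSpace.1 hK
  obtain ⟨c, φ, hφ, hc⟩ := CompactSpace.tendsto_subseq fun j (y : s) => (⟨F j y, hFK j y⟩ : K)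
  have hs : ∀ y ∈ s, CauchySeq fun j => F (φ j) y := fun y hy =>
    ((continuous_subtype_val.tendsto _).comp (tendsto_pi_nhds.1 hc ⟨y, hy⟩)).cauchySeq
  have hcauchy (x : X) : CauchySeq fun j => F (φ j) x :=
    ((hF x).comp φ).cauchySeq_of_mem_closure (hsd.closure_eq ▸ Set.mem_univ x) hs
  choose g _ hg using fun x => cauchySeq_tendsto_of_isComplete hK.isComplete
    (fun j => hFK (φ j) x) (hcauchy x)
  exact ⟨φ, hφ, g, hg⟩

end Equicontinuous

lemma Separated.finite_inter_Ioo {d : ℝ} (hd : 0 < d) {S : Set ℝ} (hS : Separated d S) (a b : ℝ) :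
    (S ∩ Set.Ioo a b).Finite := by
  have hinj : Set.InjOn (fun x => ⌊x / d⌋) (S ∩ Set.Ioo a b) := by
    intro x hx y hy hxy
    by_contra hne
    have h := Int.abs_sub_lt_one_of_floor_eq_floor hxy
    rw [← sub_div, abs_div, abs_of_pos hd, div_lt_one hd] at h
    exact (hS x hx.1 y hy.1 hne).not_gt h
  refine Set.Finite.of_finite_image ((Set.finite_Icc ⌊a / d⌋ ⌊b / d⌋).subset ?_) hinj
  rintro k ⟨x, hx, rfl⟩
  exact ⟨Int.floor_le_floor (by gcongr; exact hx.2.1.le), Int.floor_le_floor (by gcongr; exact hx.2.2.le)⟩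

section ZeroSetOfLimit

variable {Λs : ℕ → Set ℝ} {L : ℝ → ℝ}

lemma separated_setOf_eq_zero
    (hL : ∀ x, Tendsto (fun j => truncInfDist (Λs j) x) atTop (𝓝 (L x))) {d : ℝ}
    (hsep : ∀ j, Separated d (Λs j)) : Separated d {x | L x = 0} := by
  intro x (hx : L x = 0) y (hy : L y = 0) hxy
  rw [← Real.dist_eq]
  by_contra! hlt
  have hpos : 0 < dist x y := dist_pos.2 hxy
  set ε := min ((d - dist x y) / 2) (dist x y / 2)
  have hε : 0 < ε := lt_min (by linarith) (by linarith)
  obtain ⟨j, ⟨p, hp, hxp⟩, ⟨r, hr, hyr⟩⟩ :=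
    ((eventually_exists_dist_lt_of_tendsto_truncInfDist (hx ▸ hL x) hε).and
      (eventually_exists_dist_lt_of_tendsto_truncInfDist (hy ▸ hL y) hε)).exists
  rcases eq_or_ne p r with rfl | hpr
  · have : ε ≤ dist x y / 2 := min_le_right _ _
    linarith [dist_triangle_right x y p]
  · have : ε ≤ (d - dist x y) / 2 := min_le_left _ _
    have hd : d ≤ dist p r := Real.dist_eq p r ▸ hsep j p hp r hr hpr
    linarith [dist_triangle4 p x y r, dist_comm p x]

lemma eventually_near_setOf_eq_zero
    (hL : ∀ x, Tendsto (fun j => truncInfDist (Λs j) x) atTop (𝓝 (L x))) {a b : ℝ}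
    (ha : L a ≠ 0) (hb : L b ≠ 0) {ε : ℝ} (hε : 0 < ε) :
    ∀ᶠ j in atTop, ∀ x ∈ Λs j ∩ Set.Ioo a b, ∃ y ∈ {x | L x = 0} ∩ Set.Ioo a b, |x - y| < ε := by
  by_contra hcon
  obtain ⟨ψ, hψ, hfar⟩ := extraction_of_frequently_atTop (not_eventually.1 hcon)
  push Not at hfar
  choose x hx hfar using hfar
  obtain ⟨x₀, hx₀, σ, hσ, hlim⟩ :=
    isCompact_Icc.tendsto_subseq fun m => Set.Ioo_subset_Icc_self (hx m).2
  have hLx₀ : L x₀ = 0 := tendsto_nhds_unique ((hL x₀).comp (hψ.comp hσ).tendsto_atTop)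
    (tendsto_truncInfDist_of_tendsto_mem (fun m => (hx (σ m)).1) hlim)
  have hx₀ab : x₀ ∈ Set.Ioo a b :=
    ⟨hx₀.1.lt_of_ne (by rintro rfl; exact ha hLx₀), hx₀.2.lt_of_ne (by rintro rfl; exact hb hLx₀)⟩
  obtain ⟨m, hm⟩ := (hlim.eventually (ball_mem_nhds x₀ hε)).exists
  exact (hfar (σ m) x₀ ⟨hLx₀, hx₀ab⟩).not_gt (Real.dist_eq (x (σ m)) x₀ ▸ hm)

lemma eventually_setOf_eq_zero_near
    (hL : ∀ x, Tendsto (fun j => truncInfDist (Λs j) x) atTop (𝓝 (L x))) {a b : ℝ}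
    (hfin : ({x | L x = 0} ∩ Set.Ioo a b).Finite) {ε : ℝ} (hε : 0 < ε) :
    ∀ᶠ j in atTop, ∀ y ∈ {x | L x = 0} ∩ Set.Ioo a b, ∃ x ∈ Λs j ∩ Set.Ioo a b, |y - x| < ε := by
  refine (eventually_all_finite hfin).2 fun y ⟨hy, hyab⟩ => ?_
  obtain ⟨δ, hδ, hball⟩ := Metric.isOpen_iff.1 isOpen_Ioo y hyab
  filter_upwards [eventually_exists_dist_lt_of_tendsto_truncInfDist ((hy : L y = 0) ▸ hL y)
    (lt_min hε hδ)] with j ⟨p, hp, hyp⟩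
  exact ⟨p, ⟨hp, hball (mem_ball'.2 (hyp.trans_le (min_le_right _ _)))⟩,
    Real.dist_eq y p ▸ hyp.trans_le (min_le_left _ _)⟩

lemma weakLim_setOf_eq_zero
    (hL : ∀ x, Tendsto (fun j => truncInfDist (Λs j) x) atTop (𝓝 (L x)))
    (hfin : ∀ a b, ({x | L x = 0} ∩ Set.Ioo a b).Finite) :
    WeakLim Λs {x | L x = 0} := fun _ hε _ _ ha hb =>
  (eventually_near_setOf_eq_zero hL ha hb hε).and
    (eventually_setOf_eq_zero_near hL (hfin _ _) hε)

end ZeroSetOfLimit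

/-- a sequence of `d`-separated sets has a subsequence converging
weakly to some (possibly empty) set `Λ` with `d(Λ) ≥ d`. -/
theorem stmt10 (d : ℝ) (hd : 0 < d) (Λs : ℕ → Set ℝ) (hsep : ∀ j, Separated d (Λs j)) :
    ∃ φ : ℕ → ℕ, StrictMono φ ∧ ∃ Λ : Set ℝ, Separated d Λ ∧ WeakLim (Λs ∘ φ) Λ := by
  obtain ⟨φ, hφ, L, hL⟩ :=
    (LipschitzWith.uniformEquicontinuous _ 1 fun j => lipschitzWith_truncInfDist (Λs j)).equicontinuous
      |>.exists_subseq_tendsto isCompact_Icc fun j x => truncInfDist_mem_Icc (Λs j) x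
  have hΛ : Separated d {x | L x = 0} :=
    separated_setOf_eq_zero (Λs := Λs ∘ φ) hL fun j => hsep (φ j)
  exact ⟨φ, hφ, _, hΛ, weakLim_setOf_eq_zero hL fun a b => hΛ.finite_inter_Ioo hd a b⟩
end
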